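/- For graphs G and Q, the graph edit distance satisfies ged(G,Q) ≥ max{|V_G|,|V_Q|} − |Σ_{V_G} ∩ Σ_{V_Q}| + max{Δ₁(G,Q) + Δ₂(G,Q), Δ₁(G,Q) + |E_Q| − |Σ_{E_G} ∩ Σ_{E_Q}|}, where Δ₁ and Δ₂ are the degree-sequence lower bounds on the numbers of edge deletions and insertions respectively, and the label intersections are multiset intersections. -/

import Mathlib

open scoped Classical

/-- A labeled simple undirected graph over the vertex universe `ℕ` with labels in `L`. -/
structure LG (L : Type*) where
  verts : Finset ℕ
  edges : Finset (Sym2 ℕ)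
  loopless : ∀ e ∈ edges, ¬ e.IsDiag
  edge_verts : ∀ e ∈ edges, ∀ x ∈ e, x ∈ verts
  vlab : ℕ → L
  elabel : Sym2 ℕ → L

variable {L : Type*}

/-- One edit operation (uniform cost model, each of cost 1): insert/delete an isolated
vertex, insert/delete an edge, or substitute the label of a vertex or an edge. -/
def EditStep (G G' : LG L) : Prop :=
  -- insert an isolated vertex
  (∃ v, v ∉ G.verts ∧ G'.verts = insert v G.verts ∧ G'.edges = G.edges ∧
    (∀ u ∈ G.verts, G'.vlab u = G.vlab u) ∧ G'.elabel = G.elabel) ∨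
  -- delete an isolated vertex
  (∃ v ∈ G.verts, (∀ e ∈ G.edges, v ∉ e) ∧ G'.verts = G.verts.erase v ∧
    G'.edges = G.edges ∧ (∀ u ∈ G'.verts, G'.vlab u = G.vlab u) ∧ G'.elabel = G.elabel) ∨
  -- insert an edge
  (∃ e, e ∉ G.edges ∧ ¬ e.IsDiag ∧ (∀ x ∈ e, x ∈ G.verts) ∧ G'.verts = G.verts ∧
    G'.edges = insert e G.edges ∧ G'.vlab = G.vlab ∧
    (∀ e' ∈ G.edges, G'.elabel e' = G.elabel e')) ∨
  -- delete an edge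
  (∃ e ∈ G.edges, G'.verts = G.verts ∧ G'.edges = G.edges.erase e ∧
    G'.vlab = G.vlab ∧ (∀ e' ∈ G'.edges, G'.elabel e' = G.elabel e')) ∨
  -- substitute a vertex label
  (∃ v ∈ G.verts, G'.verts = G.verts ∧ G'.edges = G.edges ∧
    (∀ u ∈ G.verts, u ≠ v → G'.vlab u = G.vlab u) ∧ G'.elabel = G.elabel) ∨
  -- substitute an edge label
  (∃ e ∈ G.edges, G'.verts = G.verts ∧ G'.edges = G.edges ∧ G'.vlab = G.vlab ∧
    (∀ e' ∈ G.edges, e' ≠ e → G'.elabel e' = G.elabel e'))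

/-- Label-preserving graph isomorphism between labeled graphs. -/
def LIso (G Q : LG L) : Prop :=
  ∃ φ : ℕ → ℕ, Set.BijOn φ ↑G.verts ↑Q.verts ∧
    (∀ u ∈ G.verts, ∀ v ∈ G.verts, (s(u, v) ∈ G.edges ↔ s(φ u, φ v) ∈ Q.edges)) ∧
    (∀ u ∈ G.verts, Q.vlab (φ u) = G.vlab u) ∧
    (∀ e ∈ G.edges, Q.elabel (Sym2.map φ e) = G.elabel e)

/-- The multiset `Σ_V` of vertex labels of a graph. -/
def vLabels (G : LG L) : Multiset L := G.verts.val.map G.vlab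

/-- The multiset `Σ_E` of edge labels of a graph. -/
def eLabels (G : LG L) : Multiset L := G.edges.val.map G.elabel

/-- The degree sequence of a graph, sorted in nonincreasing order; indexing with
`List.getD · 0` pads it with zeros (giving `δ'` of any desired common length). -/
noncomputable def degSeq (G : LG L) : List ℕ :=
  ((G.verts.val.map fun u => (G.edges.filter fun e => u ∈ e).card).sort (· ≤ ·)).reverse

/-- `Δ₁(G,Q) = ⌈Σ_{δ'_G[i] > δ'_Q[i]} (δ'_G[i] − δ'_Q[i]) / 2⌉`, the degree-sequence
lower bound on edge deletions (truncated ℕ-subtraction gives the positive parts and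
`⌈x/2⌉ = (x+1)/2`; the sequences are padded to common length `max{|V_G|,|V_Q|}`). -/
noncomputable def Δ₁ (G Q : LG L) : ℕ :=
  ((∑ i ∈ Finset.range (max G.verts.card Q.verts.card),
      ((degSeq G).getD i 0 - (degSeq Q).getD i 0)) + 1) / 2

/-- `Δ₂(G,Q) = ⌈Σ_{δ'_G[i] ≤ δ'_Q[i]} (δ'_Q[i] − δ'_G[i]) / 2⌉`, the degree-sequence
lower bound on edge insertions. -/
noncomputable def Δ₂ (G Q : LG L) : ℕ :=
  ((∑ i ∈ Finset.range (max G.verts.card Q.verts.card),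
      ((degSeq Q).getD i 0 - (degSeq G).getD i 0)) + 1) / 2

namespace GedAux

noncomputable def g (m : Multiset ℕ) (i : ℕ) : ℕ := ((m.sort (· ≤ ·)).reverse).getD i 0

noncomputable def cnt (m : Multiset ℕ) (t : ℕ) : ℕ := Multiset.countP (fun d => t ≤ d) m

lemma listA (t : ℕ) (ht : 1 ≤ t) : ∀ (l : List ℕ), l.Pairwise (· ≥ ·) → ∀ i,
    (t ≤ l.getD i 0 ↔ i < l.countP (fun d => decide (t ≤ d))) := by
  intro l
  induction l with
  | nil => intro _ i; simp; omega
  | cons x xs ih =>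
    intro h i
    have hx : ∀ y ∈ xs, y ≤ x := (List.pairwise_cons.mp h).1
    have hxs : xs.Pairwise (· ≥ ·) := (List.pairwise_cons.mp h).2
    by_cases htx : t ≤ x
    · cases i with
      | zero => simp [List.countP_cons, htx]
      | succ i =>
        have := ih hxs i
        rw [List.getD_cons_succ, List.countP_cons, this]
        simp only [htx, decide_true, decide_eq_true_eq, if_pos]
        omega
    · have h0 : xs.countP (fun d => decide (t ≤ d)) = 0 := by
        rw [List.countP_eq_zero]
        intro y hy
        simp only [decide_eq_true_eq]
        have := hx y hy; omega
      cases i with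
      | zero => simp [List.countP_cons, htx, h0]
      | succ i =>
        have hlt : List.getD xs i 0 < t := by
          rcases Nat.lt_or_ge i xs.length with hi | hi
          · have hmem : xs.getD i 0 ∈ xs := by
              rw [List.getD_eq_getElem _ _ hi]; exact List.getElem_mem hi
            have := hx _ hmem; omega
          · rw [List.getD_eq_default _ _ hi]; omega
        rw [List.getD_cons_succ, List.countP_cons, h0]
        simp only [decide_eq_true_eq, htx, if_false]
        omega

lemma gA (m : Multiset ℕ) (t : ℕ) (ht : 1 ≤ t) (i : ℕ) : t ≤ g m i ↔ i < cnt m t := by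
  have hs : ((m.sort (· ≤ ·)).reverse).Pairwise (· ≥ ·) := by
    have h1 := Multiset.pairwise_sort (s := m) (r := (· ≤ ·))
    rw [List.pairwise_reverse]
    exact h1
  have hc : cnt m t = ((m.sort (· ≤ ·)).reverse).countP (fun d => decide (t ≤ d)) := by
    rw [List.countP_reverse, cnt]
    conv_lhs => rw [← Multiset.sort_eq (s := m) (r := (· ≤ ·))]
    exact Multiset.coe_countP _ _
  rw [g, hc]
  exact listA t ht _ hs i

lemma tsub_eq_sum_ind (x y T : ℕ) (hx : x < T) :
    x - y = ∑ t ∈ Finset.Ico 1 T, (if t ≤ x ∧ ¬ t ≤ y then 1 else 0) := by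
  rw [← Finset.card_filter]
  have h : (Finset.Ico 1 T).filter (fun t => t ≤ x ∧ ¬ t ≤ y) = Finset.Ico (y+1) (x+1) := by
    ext t; simp only [Finset.mem_filter, Finset.mem_Ico]; omega
  rw [h, Nat.card_Ico]; omega

lemma tsub_eq_sum_ind' (c c' N : ℕ) (hc : c ≤ N) :
    c - c' = ∑ i ∈ Finset.range N, (if i < c ∧ ¬ i < c' then 1 else 0) := by
  rw [← Finset.card_filter]
  have h : (Finset.range N).filter (fun i => i < c ∧ ¬ i < c') = Finset.Ico c' c := by
    ext i; simp only [Finset.mem_filter, Finset.mem_range, Finset.mem_Ico]; omega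
  rw [h, Nat.card_Ico]

noncomputable def ST (m q : Multiset ℕ) (T : ℕ) : ℕ := ∑ t ∈ Finset.Ico 1 T, (cnt m t - cnt q t)

lemma S_formula (m q : Multiset ℕ) (N T : ℕ) (hm : Multiset.card m ≤ N)
    (hT : ∀ x ∈ m, x < T) (hT1 : 1 ≤ T) :
    ∑ i ∈ Finset.range N, (g m i - g q i) = ST m q T := by
  have hgT : ∀ i, g m i < T := by
    intro i
    rcases Nat.lt_or_ge i ((m.sort (· ≤ ·)).reverse).length with hi | hi
    · have hmem : ((m.sort (· ≤ ·)).reverse).getD i 0 ∈ (m.sort (· ≤ ·)).reverse := by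
        rw [List.getD_eq_getElem _ _ hi]; exact List.getElem_mem hi
      rw [List.mem_reverse, Multiset.mem_sort] at hmem
      exact hT _ hmem
    · rw [g, List.getD_eq_default _ _ hi]; omega
  calc ∑ i ∈ Finset.range N, (g m i - g q i)
      = ∑ i ∈ Finset.range N, ∑ t ∈ Finset.Ico 1 T,
          (if t ≤ g m i ∧ ¬ t ≤ g q i then 1 else 0) :=
        Finset.sum_congr rfl fun i _ => tsub_eq_sum_ind _ _ _ (hgT i)
    _ = ∑ t ∈ Finset.Ico 1 T, ∑ i ∈ Finset.range N,
          (if t ≤ g m i ∧ ¬ t ≤ g q i then 1 else 0) := Finset.sum_comm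
    _ = ∑ t ∈ Finset.Ico 1 T, ∑ i ∈ Finset.range N,
          (if i < cnt m t ∧ ¬ i < cnt q t then 1 else 0) := by
        refine Finset.sum_congr rfl fun t htm => ?_
        have ht1 : 1 ≤ t := (Finset.mem_Ico.mp htm).1
        refine Finset.sum_congr rfl fun i _ => ?_
        simp only [gA m t ht1 i, gA q t ht1 i]
    _ = ST m q T := by
        refine Finset.sum_congr rfl fun t _ => ?_
        exact (tsub_eq_sum_ind' _ _ _ ((Multiset.countP_le_card _ _).trans hm)).symm

lemma cnt_cons (x : ℕ) (r : Multiset ℕ) (t : ℕ) :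
    cnt (x ::ₘ r) t = cnt r t + if t ≤ x then 1 else 0 := by
  rw [cnt, cnt, Multiset.countP_cons]

lemma cnt_cons_succ (x : ℕ) (r : Multiset ℕ) (t : ℕ) :
    cnt ((x+1) ::ₘ r) t = cnt (x ::ₘ r) t + if t = x + 1 then 1 else 0 := by
  rw [cnt_cons, cnt_cons]; split_ifs <;> omega

lemma ind_sum_le (x T : ℕ) : ∑ t ∈ Finset.Ico 1 T, (if t = x + 1 then 1 else 0) ≤ 1 := by
  rw [Finset.sum_ite_eq']
  split_ifs <;> omega

lemma ST_left_mono (x : ℕ) (r q : Multiset ℕ) (T : ℕ) :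
    ST (x ::ₘ r) q T ≤ ST ((x+1) ::ₘ r) q T := by
  refine Finset.sum_le_sum fun t _ => ?_
  rw [cnt_cons_succ]; split_ifs <;> omega

lemma ST_left_le (x : ℕ) (r q : Multiset ℕ) (T : ℕ) :
    ST ((x+1) ::ₘ r) q T ≤ ST (x ::ₘ r) q T + 1 := by
  calc ST ((x+1) ::ₘ r) q T
      ≤ ∑ t ∈ Finset.Ico 1 T, ((cnt (x ::ₘ r) t - cnt q t) + if t = x+1 then 1 else 0) := by
        refine Finset.sum_le_sum fun t _ => ?_
        rw [cnt_cons_succ]; split_ifs <;> omega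
    _ = ST (x ::ₘ r) q T + ∑ t ∈ Finset.Ico 1 T, (if t = x+1 then 1 else 0) :=
        Finset.sum_add_distrib
    _ ≤ ST (x ::ₘ r) q T + 1 := by have := ind_sum_le x T; omega

lemma ST_right_mono (x : ℕ) (r m : Multiset ℕ) (T : ℕ) :
    ST m ((x+1) ::ₘ r) T ≤ ST m (x ::ₘ r) T := by
  refine Finset.sum_le_sum fun t _ => ?_
  rw [cnt_cons_succ]; split_ifs <;> omega

lemma ST_right_le (x : ℕ) (r m : Multiset ℕ) (T : ℕ) :
    ST m (x ::ₘ r) T ≤ ST m ((x+1) ::ₘ r) T + 1 := by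
  calc ST m (x ::ₘ r) T
      ≤ ∑ t ∈ Finset.Ico 1 T, ((cnt m t - cnt ((x+1) ::ₘ r) t) + if t = x+1 then 1 else 0) := by
        refine Finset.sum_le_sum fun t _ => ?_
        rw [cnt_cons_succ]; split_ifs <;> omega
    _ = ST m ((x+1) ::ₘ r) T + ∑ t ∈ Finset.Ico 1 T, (if t = x+1 then 1 else 0) :=
        Finset.sum_add_distrib
    _ ≤ ST m ((x+1) ::ₘ r) T + 1 := by have := ind_sum_le x T; omega

lemma ST_cons_zero_left (r q : Multiset ℕ) (T : ℕ) : ST (0 ::ₘ r) q T = ST r q T := by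
  refine Finset.sum_congr rfl fun t htm => ?_
  have ht1 : 1 ≤ t := (Finset.mem_Ico.mp htm).1
  rw [cnt_cons]
  split_ifs with h
  · omega
  · rfl

lemma ST_cons_zero_right (r m : Multiset ℕ) (T : ℕ) : ST m (0 ::ₘ r) T = ST m r T := by
  refine Finset.sum_congr rfl fun t htm => ?_
  have ht1 : 1 ≤ t := (Finset.mem_Ico.mp htm).1
  rw [cnt_cons]
  split_ifs with h
  · omega
  · rfl

lemma card_inter_le_cons {L : Type*} [DecidableEq L] (a : L) (s q : Multiset L) :
    Multiset.card (s ∩ q) ≤ Multiset.card ((a ::ₘ s) ∩ q) := by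
  refine Multiset.card_le_card ?_
  rw [Multiset.le_iff_count]
  intro b
  rw [Multiset.count_inter, Multiset.count_inter, Multiset.count_cons]
  split_ifs <;> omega

lemma card_inter_cons_le {L : Type*} [DecidableEq L] (a : L) (s q : Multiset L) :
    Multiset.card ((a ::ₘ s) ∩ q) ≤ Multiset.card (s ∩ q) + 1 := by
  have h : (a ::ₘ s) ∩ q ≤ a ::ₘ (s ∩ q) := by
    rw [Multiset.le_iff_count]
    intro b
    rw [Multiset.count_inter, Multiset.count_cons, Multiset.count_cons, Multiset.count_inter]
    split_ifs <;> omega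
  have := Multiset.card_le_card h
  rw [Multiset.card_cons] at this
  omega


variable {L : Type*}

noncomputable def degF (H : LG L) (u : ℕ) : ℕ := (H.edges.filter fun e => u ∈ e).card

noncomputable def degMS (H : LG L) : Multiset ℕ := H.verts.val.map (degF H)

lemma degSeq_eq (H : LG L) : degSeq H = ((degMS H).sort (· ≤ ·)).reverse := rfl

lemma card_degMS (H : LG L) : Multiset.card (degMS H) = H.verts.card := by
  rw [degMS, Multiset.card_map]; rfl

lemma D1_eq (G Q : LG L) (T : ℕ) (hT : ∀ x ∈ degMS G, x < T) (hT1 : 1 ≤ T) :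
    Δ₁ G Q = (ST (degMS G) (degMS Q) T + 1) / 2 := by
  rw [Δ₁, ← S_formula (degMS G) (degMS Q) (max G.verts.card Q.verts.card) T (by rw [card_degMS]; exact le_max_left _ _) hT hT1]
  rfl

lemma D2_eq (G Q : LG L) (T : ℕ) (hT : ∀ x ∈ degMS Q, x < T) (hT1 : 1 ≤ T) :
    Δ₂ G Q = (ST (degMS Q) (degMS G) T + 1) / 2 := by
  rw [Δ₂, ← S_formula (degMS Q) (degMS G) (max G.verts.card Q.verts.card) T (by rw [card_degMS]; exact le_max_right _ _) hT hT1]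
  rfl

lemma degF_zero (H : LG L) (v : ℕ) (hv : ∀ e ∈ H.edges, v ∉ e) : degF H v = 0 := by
  rw [degF, Finset.card_eq_zero, Finset.filter_eq_empty_iff]
  exact hv

lemma degF_zero_of_not_mem (H : LG L) (v : ℕ) (hv : v ∉ H.verts) : degF H v = 0 :=
  degF_zero H v fun e he hve => hv (H.edge_verts e he v hve)

lemma degF_congr_edges (H H' : LG L) (h : H'.edges = H.edges) : degF H' = degF H := by
  funext u; rw [degF, degF, h]

lemma degF_insert (H H' : LG L) (e : Sym2 ℕ) (he : e ∉ H.edges)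
    (hE : H'.edges = insert e H.edges) (w : ℕ) :
    degF H' w = degF H w + if w ∈ e then 1 else 0 := by
  rw [degF, degF, hE, Finset.filter_insert]
  split_ifs with h
  · rw [Finset.card_insert_of_notMem (fun hc => he (Finset.mem_of_mem_filter _ hc))]
  · rw [add_zero]

lemma degF_erase (H H' : LG L) (e : Sym2 ℕ) (he : e ∈ H.edges)
    (hE : H'.edges = H.edges.erase e) (w : ℕ) :
    degF H w = degF H' w + if w ∈ e then 1 else 0 := by
  rw [degF, degF, hE, Finset.filter_erase]
  split_ifs with h
  · have hmem : e ∈ H.edges.filter fun e => w ∈ e := Finset.mem_filter.mpr ⟨he, h⟩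
    rw [Finset.card_erase_of_mem hmem]
    have : 1 ≤ (H.edges.filter fun e => w ∈ e).card := Finset.card_pos.mpr ⟨e, hmem⟩
    omega
  · have heq : (Finset.filter (fun e => w ∈ e) H.edges).erase e
        = Finset.filter (fun e => w ∈ e) H.edges :=
      Finset.erase_eq_of_notMem (fun hc => h (Finset.mem_filter.mp hc).2)
    rw [heq, add_zero]

lemma degMS_vinsert (H H' : LG L) (v : ℕ) (hv : v ∉ H.verts) (hV : H'.verts = insert v H.verts)
    (hE : H'.edges = H.edges) : degMS H' = 0 ::ₘ degMS H := by
  rw [degMS, degMS, hV, Finset.insert_val_of_notMem hv, Multiset.map_cons,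
    degF_congr_edges H H' hE, degF_zero_of_not_mem H v hv]

lemma degMS_vdelete (H H' : LG L) (v : ℕ) (hv : v ∈ H.verts) (hiso : ∀ e ∈ H.edges, v ∉ e)
    (hV : H'.verts = H.verts.erase v) (hE : H'.edges = H.edges) :
    degMS H = 0 ::ₘ degMS H' := by
  have hf : degF H = degF H' := (degF_congr_edges H H' (by rw [hE])).symm
  rw [degMS, degMS, hV, Finset.erase_val, ← hf]
  conv_lhs => rw [← Multiset.cons_erase (show v ∈ H.verts.val from hv)]
  rw [Multiset.map_cons, degF_zero H v hiso]

lemma ST_left2_mono (x y : ℕ) (R q : Multiset ℕ) (T : ℕ) :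
    ST (x ::ₘ y ::ₘ R) q T ≤ ST ((x+1) ::ₘ (y+1) ::ₘ R) q T := by
  calc ST (x ::ₘ y ::ₘ R) q T = ST (y ::ₘ x ::ₘ R) q T := by rw [Multiset.cons_swap]
    _ ≤ ST ((y+1) ::ₘ x ::ₘ R) q T := ST_left_mono _ _ _ _
    _ = ST (x ::ₘ (y+1) ::ₘ R) q T := by rw [Multiset.cons_swap]
    _ ≤ ST ((x+1) ::ₘ (y+1) ::ₘ R) q T := ST_left_mono _ _ _ _

lemma ST_left2_le (x y : ℕ) (R q : Multiset ℕ) (T : ℕ) :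
    ST ((x+1) ::ₘ (y+1) ::ₘ R) q T ≤ ST (x ::ₘ y ::ₘ R) q T + 2 := by
  calc ST ((x+1) ::ₘ (y+1) ::ₘ R) q T ≤ ST (x ::ₘ (y+1) ::ₘ R) q T + 1 := ST_left_le _ _ _ _
    _ = ST ((y+1) ::ₘ x ::ₘ R) q T + 1 := by rw [Multiset.cons_swap]
    _ ≤ (ST (y ::ₘ x ::ₘ R) q T + 1) + 1 := by have := ST_left_le y (x ::ₘ R) q T; omega
    _ = ST (x ::ₘ y ::ₘ R) q T + 2 := by rw [Multiset.cons_swap]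

lemma ST_right2_mono (x y : ℕ) (R m : Multiset ℕ) (T : ℕ) :
    ST m ((x+1) ::ₘ (y+1) ::ₘ R) T ≤ ST m (x ::ₘ y ::ₘ R) T := by
  calc ST m ((x+1) ::ₘ (y+1) ::ₘ R) T ≤ ST m (x ::ₘ (y+1) ::ₘ R) T := ST_right_mono _ _ _ _
    _ = ST m ((y+1) ::ₘ x ::ₘ R) T := by rw [Multiset.cons_swap]
    _ ≤ ST m (y ::ₘ x ::ₘ R) T := ST_right_mono _ _ _ _
    _ = ST m (x ::ₘ y ::ₘ R) T := by rw [Multiset.cons_swap]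

lemma ST_right2_le (x y : ℕ) (R m : Multiset ℕ) (T : ℕ) :
    ST m (x ::ₘ y ::ₘ R) T ≤ ST m ((x+1) ::ₘ (y+1) ::ₘ R) T + 2 := by
  calc ST m (x ::ₘ y ::ₘ R) T = ST m (y ::ₘ x ::ₘ R) T := by rw [Multiset.cons_swap]
    _ ≤ ST m ((y+1) ::ₘ x ::ₘ R) T + 1 := ST_right_le _ _ _ _
    _ = ST m (x ::ₘ (y+1) ::ₘ R) T + 1 := by rw [Multiset.cons_swap]
    _ ≤ (ST m ((x+1) ::ₘ (y+1) ::ₘ R) T + 1) + 1 := by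
        have := ST_right_le x ((y+1) ::ₘ R) m T; omega

lemma degMS_einsert (H H' : LG L) (e : Sym2 ℕ) (he : e ∉ H.edges) (hd : ¬ e.IsDiag)
    (hev : ∀ x ∈ e, x ∈ H.verts) (hV : H'.verts = H.verts) (hE : H'.edges = insert e H.edges) :
    ∃ x y R, degMS H = x ::ₘ y ::ₘ R ∧ degMS H' = (x+1) ::ₘ (y+1) ::ₘ R := by
  obtain ⟨a, b, rfl⟩ : ∃ a b, e = s(a, b) := by
    induction e using Sym2.ind with | _ a b => exact ⟨a, b, rfl⟩
  have hab : a ≠ b := by simpa [Sym2.mk_isDiag_iff] using hd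
  have ha : a ∈ H.verts.val := hev a (Sym2.mem_mk_left a b)
  have hb : b ∈ H.verts.val := hev b (Sym2.mem_mk_right a b)
  have hbmem : b ∈ H.verts.val.erase a := (Multiset.mem_erase_of_ne hab.symm).mpr hb
  have hsplit : a ::ₘ b ::ₘ (H.verts.val.erase a).erase b = H.verts.val := by
    rw [Multiset.cons_erase hbmem, Multiset.cons_erase ha]
  have hrest : ∀ w ∈ (H.verts.val.erase a).erase b, w ∉ s(a, b) := by
    intro w hw
    have hnd : H.verts.val.Nodup := H.verts.nodup
    have hw1 : w ∈ H.verts.val.erase a := Multiset.mem_of_mem_erase hw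
    have hwa : w ≠ a := fun h => hnd.notMem_erase (h ▸ hw1)
    have hwb : w ≠ b := fun h => (hnd.erase a).notMem_erase (h ▸ hw)
    rw [Sym2.mem_iff]
    tauto
  refine ⟨degF H a, degF H b, ((H.verts.val.erase a).erase b).map (degF H), ?_, ?_⟩
  · rw [degMS]
    conv_lhs => rw [← hsplit]
    rw [Multiset.map_cons, Multiset.map_cons]
  · rw [degMS, hV]
    conv_lhs => rw [← hsplit]
    rw [Multiset.map_cons, Multiset.map_cons]
    have hfa : degF H' a = degF H a + 1 := by
      rw [degF_insert H H' _ he hE a, if_pos (Sym2.mem_mk_left a b)]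
    have hfb : degF H' b = degF H b + 1 := by
      rw [degF_insert H H' _ he hE b, if_pos (Sym2.mem_mk_right a b)]
    rw [hfa, hfb]
    congr 1
    congr 1
    refine Multiset.map_congr rfl fun w hw => ?_
    rw [degF_insert H H' _ he hE w, if_neg (hrest w hw), add_zero]

lemma degMS_edelete (H H' : LG L) (e : Sym2 ℕ) (he : e ∈ H.edges)
    (hV : H'.verts = H.verts) (hE : H'.edges = H.edges.erase e) :
    ∃ x y R, degMS H' = x ::ₘ y ::ₘ R ∧ degMS H = (x+1) ::ₘ (y+1) ::ₘ R := by
  obtain ⟨a, b, rfl⟩ : ∃ a b, e = s(a, b) := by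
    induction e using Sym2.ind with | _ a b => exact ⟨a, b, rfl⟩
  have hd : ¬ (s(a, b) : Sym2 ℕ).IsDiag := H.loopless _ he
  have hab : a ≠ b := by simpa [Sym2.mk_isDiag_iff] using hd
  have ha : a ∈ H.verts.val := H.edge_verts _ he a (Sym2.mem_mk_left a b)
  have hb : b ∈ H.verts.val := H.edge_verts _ he b (Sym2.mem_mk_right a b)
  have hbmem : b ∈ H.verts.val.erase a := (Multiset.mem_erase_of_ne hab.symm).mpr hb
  have hsplit : a ::ₘ b ::ₘ (H.verts.val.erase a).erase b = H.verts.val := by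
    rw [Multiset.cons_erase hbmem, Multiset.cons_erase ha]
  have hrest : ∀ w ∈ (H.verts.val.erase a).erase b, w ∉ s(a, b) := by
    intro w hw
    have hnd : H.verts.val.Nodup := H.verts.nodup
    have hw1 : w ∈ H.verts.val.erase a := Multiset.mem_of_mem_erase hw
    have hwa : w ≠ a := fun h => hnd.notMem_erase (h ▸ hw1)
    have hwb : w ≠ b := fun h => (hnd.erase a).notMem_erase (h ▸ hw)
    rw [Sym2.mem_iff]
    tauto
  refine ⟨degF H' a, degF H' b, ((H.verts.val.erase a).erase b).map (degF H'), ?_, ?_⟩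
  · rw [degMS, hV]
    conv_lhs => rw [← hsplit]
    rw [Multiset.map_cons, Multiset.map_cons]
  · rw [degMS]
    conv_lhs => rw [← hsplit]
    rw [Multiset.map_cons, Multiset.map_cons]
    have hfa : degF H a = degF H' a + 1 := by
      rw [degF_erase H H' _ he hE a, if_pos (Sym2.mem_mk_left a b)]
    have hfb : degF H b = degF H' b + 1 := by
      rw [degF_erase H H' _ he hE b, if_pos (Sym2.mem_mk_right a b)]
    rw [hfa, hfb]
    congr 1
    congr 1
    refine Multiset.map_congr rfl fun w hw => ?_
    rw [degF_erase H H' _ he hE w, if_neg (hrest w hw), add_zero]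




lemma vLabels_vinsert (H H' : LG L) (v : ℕ) (hv : v ∉ H.verts)
    (hV : H'.verts = insert v H.verts) (hlab : ∀ u ∈ H.verts, H'.vlab u = H.vlab u) :
    vLabels H' = H'.vlab v ::ₘ vLabels H := by
  rw [vLabels, vLabels, hV, Finset.insert_val_of_notMem hv, Multiset.map_cons]
  congr 1
  exact Multiset.map_congr rfl fun u hu => hlab u hu

lemma vLabels_vdelete (H H' : LG L) (v : ℕ) (hv : v ∈ H.verts)
    (hV : H'.verts = H.verts.erase v) (hlab : ∀ u ∈ H'.verts, H'.vlab u = H.vlab u) :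
    vLabels H = H.vlab v ::ₘ vLabels H' := by
  rw [vLabels, vLabels, hV, Finset.erase_val]
  conv_lhs => rw [← Multiset.cons_erase (show v ∈ H.verts.val from hv)]
  rw [Multiset.map_cons]
  congr 1
  refine (Multiset.map_congr rfl fun u hu => ?_)
  exact (hlab u (by rw [hV]; exact hu)).symm

lemma eLabels_einsert (H H' : LG L) (e : Sym2 ℕ) (he : e ∉ H.edges)
    (hE : H'.edges = insert e H.edges) (hlab : ∀ e' ∈ H.edges, H'.elabel e' = H.elabel e') :
    eLabels H' = H'.elabel e ::ₘ eLabels H := by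
  rw [eLabels, eLabels, hE, Finset.insert_val_of_notMem he, Multiset.map_cons]
  congr 1
  exact Multiset.map_congr rfl fun e' he' => hlab e' he'

lemma eLabels_edelete (H H' : LG L) (e : Sym2 ℕ) (he : e ∈ H.edges)
    (hE : H'.edges = H.edges.erase e) (hlab : ∀ e' ∈ H'.edges, H'.elabel e' = H.elabel e') :
    eLabels H = H.elabel e ::ₘ eLabels H' := by
  rw [eLabels, eLabels, hE, Finset.erase_val]
  conv_lhs => rw [← Multiset.cons_erase (show e ∈ H.edges.val from he)]
  rw [Multiset.map_cons]
  congr 1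
  refine (Multiset.map_congr rfl fun e' he' => ?_)
  exact (hlab e' (by rw [hE]; exact he')).symm

lemma vLabels_sub (H H' : LG L) (v : ℕ) (hv : v ∈ H.verts) (hV : H'.verts = H.verts)
    (hlab : ∀ u ∈ H.verts, u ≠ v → H'.vlab u = H.vlab u) :
    ∃ (x x' : L) (s : Multiset L), vLabels H = x ::ₘ s ∧ vLabels H' = x' ::ₘ s := by
  have hnd : H.verts.val.Nodup := H.verts.nodup
  refine ⟨H.vlab v, H'.vlab v, (H.verts.val.erase v).map H.vlab, ?_, ?_⟩
  · rw [vLabels]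
    conv_lhs => rw [← Multiset.cons_erase (show v ∈ H.verts.val from hv)]
    rw [Multiset.map_cons]
  · rw [vLabels, hV]
    conv_lhs => rw [← Multiset.cons_erase (show v ∈ H.verts.val from hv)]
    rw [Multiset.map_cons]
    congr 1
    refine Multiset.map_congr rfl fun u hu => ?_
    exact hlab u (Multiset.mem_of_mem_erase hu) (fun h => hnd.notMem_erase (h ▸ hu))

lemma eLabels_sub (H H' : LG L) (e : Sym2 ℕ) (he : e ∈ H.edges) (hE : H'.edges = H.edges)
    (hlab : ∀ e' ∈ H.edges, e' ≠ e → H'.elabel e' = H.elabel e') :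
    ∃ (x x' : L) (s : Multiset L), eLabels H = x ::ₘ s ∧ eLabels H' = x' ::ₘ s := by
  have hnd : H.edges.val.Nodup := H.edges.nodup
  refine ⟨H.elabel e, H'.elabel e, (H.edges.val.erase e).map H.elabel, ?_, ?_⟩
  · rw [eLabels]
    conv_lhs => rw [← Multiset.cons_erase (show e ∈ H.edges.val from he)]
    rw [Multiset.map_cons]
  · rw [eLabels, hE]
    conv_lhs => rw [← Multiset.cons_erase (show e ∈ H.edges.val from he)]
    rw [Multiset.map_cons]
    congr 1
    refine Multiset.map_congr rfl fun e' he' => ?_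
    exact hlab e' (Multiset.mem_of_mem_erase he') (fun h => hnd.notMem_erase (h ▸ he'))



lemma max_le_max_add {A B A' B' n : ℕ} (hA : A ≤ A' + n) (hB : B ≤ B' + n) :
    max A B ≤ max A' B' + n :=
  max_le (hA.trans (Nat.add_le_add_right (le_max_left _ _) n))
    (hB.trans (Nat.add_le_add_right (le_max_right _ _) n))

lemma vterm_ins {M M' c c' : ℕ} (h1 : M ≤ M') (h4 : c' ≤ c + 1) : M - c ≤ M' - c' + 1 := by
  omega

lemma vterm_del {M M' c c' : ℕ} (h1 : M ≤ M' + 1) (h3 : c' ≤ c) : M - c ≤ M' - c' + 1 := by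
  omega

lemma vterm_sub {M c c' : ℕ} (h : c' ≤ c + 1) : M - c ≤ M - c' + 1 := by omega

lemma max_succ_facts (m q : ℕ) : max m q ≤ max (m+1) q ∧ max (m+1) q ≤ max m q + 1 :=
  ⟨max_le_max (Nat.le_succ m) le_rfl,
   max_le (Nat.add_le_add_right (le_max_left m q) 1) ((le_max_right m q).trans (Nat.le_succ _))⟩

variable [DecidableEq L]

noncomputable def Phi (Q H : LG L) : ℕ :=
  max H.verts.card Q.verts.card - Multiset.card (vLabels H ∩ vLabels Q)
    + max (Δ₁ H Q + Δ₂ H Q)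
        (Δ₁ H Q + (Q.edges.card - Multiset.card (eLabels H ∩ eLabels Q)))

lemma step_le (Q H H' : LG L) (h : EditStep H H') : Phi Q H ≤ Phi Q H' + 1 := by
  set T : ℕ := (degMS H).sum + (degMS H').sum + (degMS Q).sum + 1 with hTdef
  have hT1 : 1 ≤ T := by omega
  have hb : ∀ m : Multiset ℕ, ∀ x ∈ m, x ≤ m.sum := fun m x hx =>
    Multiset.single_le_sum (fun y _ => Nat.zero_le y) x hx
  have hTH : ∀ x ∈ degMS H, x < T := fun x hx => by have := hb _ x hx; omega
  have hTH' : ∀ x ∈ degMS H', x < T := fun x hx => by have := hb _ x hx; omega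
  have hTQ : ∀ x ∈ degMS Q, x < T := fun x hx => by have := hb _ x hx; omega
  have e1 : Δ₁ H Q = (ST (degMS H) (degMS Q) T + 1) / 2 := D1_eq H Q T hTH hT1
  have e2 : Δ₂ H Q = (ST (degMS Q) (degMS H) T + 1) / 2 := D2_eq H Q T hTQ hT1
  have e1' : Δ₁ H' Q = (ST (degMS H') (degMS Q) T + 1) / 2 := D1_eq H' Q T hTH' hT1
  have e2' : Δ₂ H' Q = (ST (degMS Q) (degMS H') T + 1) / 2 := D2_eq H' Q T hTQ hT1
  rw [Phi, Phi, e1, e2, e1', e2']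
  rcases h with ⟨v, hv, hV, hE, hlab, hel⟩ | ⟨v, hv, hiso, hV, hE, hlab, hel⟩ |
    ⟨e, he, hd, hev, hV, hE, hvl, hel⟩ | ⟨e, he, hV, hE, hvl, hel⟩ |
    ⟨v, hv, hV, hE, hlab, hel⟩ | ⟨e, he, hV, hE, hvl, hel⟩
  · -- vertex insertion
    have hdm : degMS H' = 0 ::ₘ degMS H := degMS_vinsert H H' v hv hV hE
    have hS1 : ST (degMS H') (degMS Q) T = ST (degMS H) (degMS Q) T := by
      rw [hdm, ST_cons_zero_left]
    have hS2 : ST (degMS Q) (degMS H') T = ST (degMS Q) (degMS H) T := by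
      rw [hdm, ST_cons_zero_right]
    have hvc : H'.verts.card = H.verts.card + 1 := by
      rw [hV, Finset.card_insert_of_notMem hv]
    have hvl' : vLabels H' = H'.vlab v ::ₘ vLabels H := vLabels_vinsert H H' v hv hV hlab
    have hcv1 : Multiset.card (vLabels H ∩ vLabels Q)
        ≤ Multiset.card (vLabels H' ∩ vLabels Q) := by
      rw [hvl']; exact card_inter_le_cons _ _ _
    have hcv2 : Multiset.card (vLabels H' ∩ vLabels Q)
        ≤ Multiset.card (vLabels H ∩ vLabels Q) + 1 := by
      rw [hvl']; exact card_inter_cons_le _ _ _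
    have hce : eLabels H' = eLabels H := by rw [eLabels, eLabels, hE, hel]
    have hM1 : max H.verts.card Q.verts.card ≤ max H'.verts.card Q.verts.card := by
      rw [hvc]; exact (max_succ_facts _ _).1
    have hM2 : max H'.verts.card Q.verts.card ≤ max H.verts.card Q.verts.card + 1 := by
      rw [hvc]; exact (max_succ_facts _ _).2
    have vterm : max H.verts.card Q.verts.card - Multiset.card (vLabels H ∩ vLabels Q)
        ≤ max H'.verts.card Q.verts.card - Multiset.card (vLabels H' ∩ vLabels Q) + 1 :=
      vterm_ins hM1 hcv2
    have eterm : max ((ST (degMS H') (degMS Q) T + 1) / 2 + (ST (degMS Q) (degMS H') T + 1) / 2)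
          ((ST (degMS H') (degMS Q) T + 1) / 2
            + (Q.edges.card - Multiset.card (eLabels H' ∩ eLabels Q)))
        = max ((ST (degMS H) (degMS Q) T + 1) / 2 + (ST (degMS Q) (degMS H) T + 1) / 2)
          ((ST (degMS H) (degMS Q) T + 1) / 2
            + (Q.edges.card - Multiset.card (eLabels H ∩ eLabels Q))) := by
      rw [hS1, hS2, hce]
    omega
  · -- vertex deletion
    have hdm : degMS H = 0 ::ₘ degMS H' := degMS_vdelete H H' v hv hiso hV hE
    have hS1 : ST (degMS H) (degMS Q) T = ST (degMS H') (degMS Q) T := by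
      rw [hdm, ST_cons_zero_left]
    have hS2 : ST (degMS Q) (degMS H) T = ST (degMS Q) (degMS H') T := by
      rw [hdm, ST_cons_zero_right]
    have hvc : H.verts.card = H'.verts.card + 1 := by
      rw [hV, Finset.card_erase_of_mem hv]
      have : 1 ≤ H.verts.card := Finset.card_pos.mpr ⟨v, hv⟩
      omega
    have hvl' : vLabels H = H.vlab v ::ₘ vLabels H' := vLabels_vdelete H H' v hv hV hlab
    have hcv1 : Multiset.card (vLabels H' ∩ vLabels Q)
        ≤ Multiset.card (vLabels H ∩ vLabels Q) := by
      rw [hvl']; exact card_inter_le_cons _ _ _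
    have hcv2 : Multiset.card (vLabels H ∩ vLabels Q)
        ≤ Multiset.card (vLabels H' ∩ vLabels Q) + 1 := by
      rw [hvl']; exact card_inter_cons_le _ _ _
    have hce : eLabels H' = eLabels H := by rw [eLabels, eLabels, hE, hel]
    have hM1 : max H'.verts.card Q.verts.card ≤ max H.verts.card Q.verts.card := by
      rw [hvc]; exact (max_succ_facts _ _).1
    have hM2 : max H.verts.card Q.verts.card ≤ max H'.verts.card Q.verts.card + 1 := by
      rw [hvc]; exact (max_succ_facts _ _).2
    have vterm : max H.verts.card Q.verts.card - Multiset.card (vLabels H ∩ vLabels Q)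
        ≤ max H'.verts.card Q.verts.card - Multiset.card (vLabels H' ∩ vLabels Q) + 1 :=
      vterm_del hM2 hcv1
    have eterm : max ((ST (degMS H') (degMS Q) T + 1) / 2 + (ST (degMS Q) (degMS H') T + 1) / 2)
          ((ST (degMS H') (degMS Q) T + 1) / 2
            + (Q.edges.card - Multiset.card (eLabels H' ∩ eLabels Q)))
        = max ((ST (degMS H) (degMS Q) T + 1) / 2 + (ST (degMS Q) (degMS H) T + 1) / 2)
          ((ST (degMS H) (degMS Q) T + 1) / 2
            + (Q.edges.card - Multiset.card (eLabels H ∩ eLabels Q))) := by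
      rw [hS1, hS2, hce]
    omega
  · -- edge insertion
    obtain ⟨x, y, R, hm, hm'⟩ := degMS_einsert H H' e he hd hev hV hE
    have hS1a : ST (degMS H) (degMS Q) T ≤ ST (degMS H') (degMS Q) T := by
      rw [hm, hm']; exact ST_left2_mono _ _ _ _ _
    have hS2b : ST (degMS Q) (degMS H) T ≤ ST (degMS Q) (degMS H') T + 2 := by
      rw [hm, hm']; exact ST_right2_le _ _ _ _ _
    have hvc : H'.verts.card = H.verts.card := by rw [hV]
    have hvlab : vLabels H' = vLabels H := by rw [vLabels, vLabels, hV, hvl]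
    have hel' : eLabels H' = H'.elabel e ::ₘ eLabels H := eLabels_einsert H H' e he hE hel
    have hce2 : Multiset.card (eLabels H' ∩ eLabels Q)
        ≤ Multiset.card (eLabels H ∩ eLabels Q) + 1 := by
      rw [hel']; exact card_inter_cons_le _ _ _
    have hce1 : Multiset.card (eLabels H ∩ eLabels Q)
        ≤ Multiset.card (eLabels H' ∩ eLabels Q) := by
      rw [hel']; exact card_inter_le_cons _ _ _
    have vterm : max H.verts.card Q.verts.card - Multiset.card (vLabels H ∩ vLabels Q)
        = max H'.verts.card Q.verts.card - Multiset.card (vLabels H' ∩ vLabels Q) := by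
      rw [hvc, hvlab]
    have eterm : max ((ST (degMS H) (degMS Q) T + 1) / 2 + (ST (degMS Q) (degMS H) T + 1) / 2)
          ((ST (degMS H) (degMS Q) T + 1) / 2
            + (Q.edges.card - Multiset.card (eLabels H ∩ eLabels Q)))
        ≤ max ((ST (degMS H') (degMS Q) T + 1) / 2 + (ST (degMS Q) (degMS H') T + 1) / 2)
          ((ST (degMS H') (degMS Q) T + 1) / 2
            + (Q.edges.card - Multiset.card (eLabels H' ∩ eLabels Q))) + 1 := by
      refine max_le_max_add ?_ ?_ <;> omega
    omega
  · -- edge deletion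
    obtain ⟨x, y, R, hm', hm⟩ := degMS_edelete H H' e he hV hE
    have hS1b : ST (degMS H) (degMS Q) T ≤ ST (degMS H') (degMS Q) T + 2 := by
      rw [hm, hm']; exact ST_left2_le _ _ _ _ _
    have hS2a : ST (degMS Q) (degMS H) T ≤ ST (degMS Q) (degMS H') T := by
      rw [hm, hm']; exact ST_right2_mono _ _ _ _ _
    have hvc : H'.verts.card = H.verts.card := by rw [hV]
    have hvlab : vLabels H' = vLabels H := by rw [vLabels, vLabels, hV, hvl]
    have hel' : eLabels H = H.elabel e ::ₘ eLabels H' := eLabels_edelete H H' e he hE hel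
    have hce1 : Multiset.card (eLabels H' ∩ eLabels Q)
        ≤ Multiset.card (eLabels H ∩ eLabels Q) := by
      rw [hel']; exact card_inter_le_cons _ _ _
    have vterm : max H.verts.card Q.verts.card - Multiset.card (vLabels H ∩ vLabels Q)
        = max H'.verts.card Q.verts.card - Multiset.card (vLabels H' ∩ vLabels Q) := by
      rw [hvc, hvlab]
    have eterm : max ((ST (degMS H) (degMS Q) T + 1) / 2 + (ST (degMS Q) (degMS H) T + 1) / 2)
          ((ST (degMS H) (degMS Q) T + 1) / 2
            + (Q.edges.card - Multiset.card (eLabels H ∩ eLabels Q)))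
        ≤ max ((ST (degMS H') (degMS Q) T + 1) / 2 + (ST (degMS Q) (degMS H') T + 1) / 2)
          ((ST (degMS H') (degMS Q) T + 1) / 2
            + (Q.edges.card - Multiset.card (eLabels H' ∩ eLabels Q))) + 1 := by
      refine max_le_max_add ?_ ?_ <;> omega
    omega
  · -- vertex label substitution
    obtain ⟨xl, xl', s, hs, hs'⟩ := vLabels_sub H H' v hv hV hlab
    have hdm : degMS H' = degMS H := by
      rw [degMS, degMS, hV, degF_congr_edges H H' hE]
    have hvc : H'.verts.card = H.verts.card := by rw [hV]
    have hce : eLabels H' = eLabels H := by rw [eLabels, eLabels, hE, hel]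
    have hcv1 : Multiset.card (vLabels H' ∩ vLabels Q)
        ≤ Multiset.card (s ∩ vLabels Q) + 1 := by rw [hs']; exact card_inter_cons_le _ _ _
    have hcv2 : Multiset.card (s ∩ vLabels Q)
        ≤ Multiset.card (vLabels H ∩ vLabels Q) := by rw [hs]; exact card_inter_le_cons _ _ _
    have hM : max H'.verts.card Q.verts.card = max H.verts.card Q.verts.card := by rw [hvc]
    have vterm : max H.verts.card Q.verts.card - Multiset.card (vLabels H ∩ vLabels Q)
        ≤ max H'.verts.card Q.verts.card - Multiset.card (vLabels H' ∩ vLabels Q) + 1 := by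
      rw [hM]; exact vterm_sub (by omega)
    have eterm : max ((ST (degMS H') (degMS Q) T + 1) / 2 + (ST (degMS Q) (degMS H') T + 1) / 2)
          ((ST (degMS H') (degMS Q) T + 1) / 2
            + (Q.edges.card - Multiset.card (eLabels H' ∩ eLabels Q)))
        = max ((ST (degMS H) (degMS Q) T + 1) / 2 + (ST (degMS Q) (degMS H) T + 1) / 2)
          ((ST (degMS H) (degMS Q) T + 1) / 2
            + (Q.edges.card - Multiset.card (eLabels H ∩ eLabels Q))) := by
      rw [hdm, hce]
    omega
  · -- edge label substitution
    obtain ⟨xl, xl', s, hs, hs'⟩ := eLabels_sub H H' e he hE hel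
    have hdm : degMS H' = degMS H := by
      rw [degMS, degMS, hV, degF_congr_edges H H' hE]
    have hvc : H'.verts.card = H.verts.card := by rw [hV]
    have hvlab : vLabels H' = vLabels H := by rw [vLabels, vLabels, hV, hvl]
    have hce1 : Multiset.card (eLabels H' ∩ eLabels Q)
        ≤ Multiset.card (s ∩ eLabels Q) + 1 := by rw [hs']; exact card_inter_cons_le _ _ _
    have hce2 : Multiset.card (s ∩ eLabels Q)
        ≤ Multiset.card (eLabels H ∩ eLabels Q) := by rw [hs]; exact card_inter_le_cons _ _ _
    have vterm : max H.verts.card Q.verts.card - Multiset.card (vLabels H ∩ vLabels Q)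
        = max H'.verts.card Q.verts.card - Multiset.card (vLabels H' ∩ vLabels Q) := by
      rw [hvc, hvlab]
    have eterm : max ((ST (degMS H) (degMS Q) T + 1) / 2 + (ST (degMS Q) (degMS H) T + 1) / 2)
          ((ST (degMS H) (degMS Q) T + 1) / 2
            + (Q.edges.card - Multiset.card (eLabels H ∩ eLabels Q)))
        ≤ max ((ST (degMS H') (degMS Q) T + 1) / 2 + (ST (degMS Q) (degMS H') T + 1) / 2)
          ((ST (degMS H') (degMS Q) T + 1) / 2
            + (Q.edges.card - Multiset.card (eLabels H' ∩ eLabels Q))) + 1 := by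
      rw [hdm]
      refine max_le_max_add ?_ ?_ <;> omega
    omega

lemma phi_iso (Q' Q : LG L) (h : LIso Q' Q) : Phi Q Q' = 0 := by
  obtain ⟨φ, hbij, hedge, hvl, hel⟩ := h
  have hinj := hbij.injOn
  have himg : Q'.verts.image φ = Q.verts := by
    ext x
    simp only [Finset.mem_image]
    constructor
    · rintro ⟨u, hu, rfl⟩
      exact hbij.mapsTo hu
    · intro hx
      obtain ⟨u, hu, hux⟩ := hbij.surjOn hx
      exact ⟨u, hu, hux⟩
  have hvalv : Q.verts.val = Q'.verts.val.map φ := by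
    rw [← himg, Finset.image_val, Multiset.dedup_eq_self.mpr]
    exact Multiset.Nodup.map_on (fun x hx y hy hxy => hinj hx hy hxy) Q'.verts.nodup
  have hcardV : Q.verts.card = Q'.verts.card := by
    rw [Finset.card, hvalv, Multiset.card_map]
    rfl
  have hvlabels : vLabels Q = vLabels Q' := by
    rw [vLabels, vLabels, hvalv, Multiset.map_map]
    exact Multiset.map_congr rfl fun u hu => hvl u hu
  have hmapsE : ∀ e ∈ Q'.edges, Sym2.map φ e ∈ Q.edges := by
    intro e
    induction e using Sym2.ind with
    | _ a b =>
      intro he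
      have ha := Q'.edge_verts _ he a (Sym2.mem_mk_left a b)
      have hb := Q'.edge_verts _ he b (Sym2.mem_mk_right a b)
      rw [Sym2.map_pair_eq]
      exact (hedge a ha b hb).mp he
  have hinjE : ∀ e₁ ∈ Q'.edges, ∀ e₂ ∈ Q'.edges, Sym2.map φ e₁ = Sym2.map φ e₂ → e₁ = e₂ := by
    intro e₁
    induction e₁ using Sym2.ind with
    | _ a b =>
      intro h1 e₂
      induction e₂ using Sym2.ind with
      | _ c d =>
        intro h2 heq
        have ha := Q'.edge_verts _ h1 a (Sym2.mem_mk_left a b)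
        have hb := Q'.edge_verts _ h1 b (Sym2.mem_mk_right a b)
        have hc := Q'.edge_verts _ h2 c (Sym2.mem_mk_left c d)
        have hd := Q'.edge_verts _ h2 d (Sym2.mem_mk_right c d)
        rw [Sym2.map_pair_eq, Sym2.map_pair_eq, Sym2.eq_iff] at heq
        rw [Sym2.eq_iff]
        rcases heq with ⟨ha', hb'⟩ | ⟨ha', hb'⟩
        · exact Or.inl ⟨hinj ha hc ha', hinj hb hd hb'⟩
        · exact Or.inr ⟨hinj ha hd ha', hinj hb hc hb'⟩
  have himgE : Q'.edges.image (Sym2.map φ) = Q.edges := by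
    ext f
    induction f using Sym2.ind with
    | _ x y =>
      simp only [Finset.mem_image]
      constructor
      · rintro ⟨e, he, heq⟩
        rw [← heq]
        exact hmapsE e he
      · intro hf
        have hx := Q.edge_verts _ hf x (Sym2.mem_mk_left x y)
        have hy := Q.edge_verts _ hf y (Sym2.mem_mk_right x y)
        obtain ⟨a, ha, rfl⟩ := hbij.surjOn hx
        obtain ⟨b, hb, rfl⟩ := hbij.surjOn hy
        exact ⟨s(a, b), (hedge a ha b hb).mpr hf, Sym2.map_pair_eq φ a b⟩
  have hvalE : Q.edges.val = Q'.edges.val.map (Sym2.map φ) := by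
    rw [← himgE, Finset.image_val, Multiset.dedup_eq_self.mpr]
    exact Multiset.Nodup.map_on (fun x hx y hy => hinjE x hx y hy) Q'.edges.nodup
  have hcardE : Q.edges.card = Q'.edges.card := by
    rw [Finset.card, hvalE, Multiset.card_map]
    rfl
  have helabels : eLabels Q = eLabels Q' := by
    rw [eLabels, eLabels, hvalE, Multiset.map_map]
    exact Multiset.map_congr rfl fun e he => hel e he
  have hdegfilter : ∀ u ∈ Q'.verts,
      (Q.edges.filter fun e => φ u ∈ e) = (Q'.edges.filter fun e => u ∈ e).image (Sym2.map φ) := by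
    intro u hu
    ext f
    simp only [Finset.mem_filter, Finset.mem_image]
    constructor
    · rintro ⟨hf, hmem⟩
      have hf' : f ∈ Q'.edges.image (Sym2.map φ) := by rw [himgE]; exact hf
      rw [Finset.mem_image] at hf'
      obtain ⟨e, he, rfl⟩ := hf'
      refine ⟨e, ⟨he, ?_⟩, rfl⟩
      rw [Sym2.mem_map] at hmem
      obtain ⟨a, hae, hau⟩ := hmem
      have haV : a ∈ Q'.verts := Q'.edge_verts _ he a hae
      have hauu : a = u := hinj haV hu hau
      rw [← hauu]
      exact hae
    · rintro ⟨e, ⟨he, hue⟩, rfl⟩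
      exact ⟨hmapsE e he, Sym2.mem_map.mpr ⟨u, hue, rfl⟩⟩
  have hdegeq : ∀ u ∈ Q'.verts, degF Q (φ u) = degF Q' u := by
    intro u hu
    rw [degF, degF, hdegfilter u hu]
    exact Finset.card_image_of_injOn
      (fun x hx y hy => hinjE x (Finset.mem_of_mem_filter _ hx) y (Finset.mem_of_mem_filter _ hy))
  have hdm : degMS Q = degMS Q' := by
    rw [degMS, degMS, hvalv, Multiset.map_map]
    exact Multiset.map_congr rfl fun u hu => hdegeq u hu
  have hds : degSeq Q' = degSeq Q := by rw [degSeq_eq, degSeq_eq, hdm]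
  have hD1 : Δ₁ Q' Q = 0 := by
    rw [Δ₁]
    have hz : ∀ i ∈ Finset.range (max Q'.verts.card Q.verts.card),
        (degSeq Q').getD i 0 - (degSeq Q).getD i 0 = 0 := fun i _ => by rw [hds]; omega
    rw [Finset.sum_congr rfl hz, Finset.sum_const_zero]
    norm_num
  have hD2 : Δ₂ Q' Q = 0 := by
    rw [Δ₂]
    have hz : ∀ i ∈ Finset.range (max Q'.verts.card Q.verts.card),
        (degSeq Q).getD i 0 - (degSeq Q').getD i 0 = 0 := fun i _ => by rw [hds]; omega
    rw [Finset.sum_congr rfl hz, Finset.sum_const_zero]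
    norm_num
  have hintself : ∀ (s : Multiset L), s ∩ s = s := fun s =>
    Multiset.ext.mpr fun a => by rw [Multiset.count_inter]; omega
  have hcv : Multiset.card (vLabels Q' ∩ vLabels Q) = Q'.verts.card := by
    rw [hvlabels, hintself, vLabels, Multiset.card_map]
    rfl
  have hce : Multiset.card (eLabels Q' ∩ eLabels Q) = Q.edges.card := by
    rw [helabels, hintself, eLabels, Multiset.card_map, hcardE]
    rfl
  have hmax : max Q'.verts.card Q.verts.card = Q'.verts.card := by
    rw [hcardV]
    exact max_self _
  rw [Phi, hD1, hD2, hcv, hce, hmax]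
  simp
end GedAux

/-- Theorem 5: any edit path transforming `G` into (an isomorphic copy of)
`Q` has length at least
`LB(G,Q) = max{|V_G|,|V_Q|} − |Σ_{V_G} ∩ Σ_{V_Q}|
  + max{Δ₁(G,Q) + Δ₂(G,Q), Δ₁(G,Q) + |E_Q| − |Σ_{E_G} ∩ Σ_{E_Q}|}`,
hence `ged(G,Q) ≥ LB(G,Q)` (the label intersections are multiset intersections). -/
theorem stmt15 [DecidableEq L] (G Q : LG L) (k : ℕ) (f : ℕ → LG L)
    (h0 : f 0 = G) (hstep : ∀ i < k, EditStep (f i) (f (i + 1)))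
    (hk : LIso (f k) Q) :
    max G.verts.card Q.verts.card - Multiset.card (vLabels G ∩ vLabels Q)
      + max (Δ₁ G Q + Δ₂ G Q)
          (Δ₁ G Q + (Q.edges.card - Multiset.card (eLabels G ∩ eLabels Q)))
      ≤ k := by
  have key : ∀ j i, i + j = k → GedAux.Phi Q (f i) ≤ j := by
    intro j
    induction j with
    | zero =>
      intro i hi
      have hik : i = k := by omega
      subst hik
      exact le_of_eq (GedAux.phi_iso (f i) Q hk)
    | succ j ih =>
      intro i hi
      have h1 : GedAux.Phi Q (f i) ≤ GedAux.Phi Q (f (i + 1)) + 1 :=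
        GedAux.step_le Q (f i) (f (i + 1)) (hstep i (by omega))
      have h2 := ih (i + 1) (by omega)
      omega
  have hfin := key k 0 (by omega)
  rw [h0] at hfin
  exact hfin
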